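/- arXiv:2602.17344 — 2 statements merged into one kernel-verified Lean document; each statement's English description precedes it below -/
import Mathlib

section
/- Let d > 3 and assume b is continuously differentiable on the open set Σ_{2,χ} and that the set {σ ∈ Σ2 : the Fréchet derivative Db(σ) : ℝ^d → ℂ is not of the form x ↦ c·⟨π_σ ν, x⟩ for any c ∈ ℂ} is dense in Σ2. Then every nonempty relatively open subset U of Y2 contains a point y' for which there exists λ' ∈ ℝ such that b is not constant on C_{y',λ'} (i.e., there exist σ, σ̂ ∈ C_{y',λ'} with b(σ) ≠ b(σ̂)). -/
open Set MeasureTheory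
open scoped RealInnerProductSpace

noncomputable section

abbrev Euc (d : ℕ) := EuclideanSpace ℝ (Fin d)

/-- Reflection across the hyperplane `ν^⊥` (Householder transform). -/
def Hr {d : ℕ} (ν x : Euc d) : Euc d := x - (2 * ⟪x, ν⟫) • ν

/-- Open hemisphere of radius `k0` in direction `v`. -/
def Shemi {d : ℕ} (k0 : ℝ) (v : Euc d) : Set (Euc d) := {x | ‖x‖ = k0 ∧ 0 < ⟪x, v⟫}

def Sig1 {d : ℕ} (k0 : ℝ) (ν ω : Euc d) : Set (Euc d) :=
  {σ | σ ∈ Shemi k0 ω ∧ Hr ν σ ∉ Shemi k0 ω}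

def Sig2 {d : ℕ} (k0 : ℝ) (ν ω : Euc d) : Set (Euc d) :=
  {σ | σ ∈ Shemi k0 ω ∧ Hr ν σ ∈ Shemi k0 ω}

def Y1set {d : ℕ} (k0 : ℝ) (ν ω e : Euc d) : Set (Euc d) :=
  {y | ∃ η ∈ Shemi k0 e, ∃ σ ∈ Sig1 k0 ν ω, y = η - σ}

def Y2set {d : ℕ} (k0 : ℝ) (ν ω e : Euc d) : Set (Euc d) :=
  {y | ∃ η ∈ Shemi k0 e, ∃ σ ∈ Sig2 k0 ν ω, y = η - σ}

def Sig2chi {d : ℕ} (k0 χ : ℝ) (ν ω : Euc d) : Set (Euc d) :=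
  {x | ∃ σ ∈ Sig2 k0 ν ω, ∃ t ∈ Set.Ioo (1 - χ) (1 + χ), x = t • σ}

/-- The hypotheses on the coefficient function `b`. -/
def BHyp {d : ℕ} (k0 χ : ℝ) (ν ω : Euc d) (b : Euc d → ℂ) : Prop :=
  (∀ x ∈ Sig2chi k0 χ ν ω, b x ≠ 0) ∧
  ∀ σ ∈ Sig2 k0 ν ω, ∀ t ∈ Set.Ioo (1 - χ) (1 + χ), b (t • σ) = b σ

/-- `g` solves the homogeneous system. -/
def SolvesHom {d : ℕ} (k0 : ℝ) (ν ω e : Euc d) (b g : Euc d → ℂ) : Prop :=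
  ∀ η ∈ Shemi k0 e,
    (∀ σ ∈ Sig1 k0 ν ω, g (η - σ) = 0) ∧
    ∀ σ ∈ Sig2 k0 ν ω, b σ * g (η - σ) + g (η - Hr ν σ) = 0

/-- The coupling set `F_y`. -/
def Fcoup {d : ℕ} (k0 : ℝ) (ν ω e : Euc d) (y : Euc d) : Set (Euc d) :=
  {z | ∃ η ∈ Shemi k0 e, ∃ σ ∈ Sig2 k0 ν ω, y = η - σ ∧ z = η - Hr ν σ}

/-- The set `C_{y,λ}`. -/
def Cset {d : ℕ} (k0 : ℝ) (ν ω e : Euc d) (y : Euc d) (lam : ℝ) : Set (Euc d) :=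
  {σ | σ ∈ Sig2 k0 ν ω ∧ σ + y ∈ Shemi k0 e ∧ ⟪σ, ν⟫ = lam}

/-- The `d`-th standard basis vector. -/
def eLast (d : ℕ) (hd : 0 < d) : Euc d :=
  EuclideanSpace.single ⟨d - 1, Nat.sub_lt hd one_pos⟩ 1

def e2 : Euc 2 := EuclideanSpace.single 1 1
def e3 : Euc 3 := EuclideanSpace.single 2 1

/-- Degenerate points. -/
def degS {d : ℕ} (k0 : ℝ) (ν ω e : Euc d) : Set (Euc d) :=
  {y | ∃ η ∈ Shemi k0 e, ∃ σ ∈ Sig2 k0 ν ω, (⟪η, ν⟫ = 0 ∨ ⟪σ, ν⟫ = 0) ∧ y = η - σ}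

/-- Non-degenerate points `Y2'`. -/
def Y2nd {d : ℕ} (k0 : ℝ) (ν ω e : Euc d) : Set (Euc d) :=
  (Y2set k0 ν ω e ∩ {x | ‖x‖ < 2 * k0}) \
    (degS k0 ν ω e ∪ {x | ⟪x, ν⟫ = 0} ∪ {x | ∃ t : ℝ, x = t • ν})

/-- The set `Ỹ`. -/
def Ytil {d : ℕ} (k0 : ℝ) (ν ω e : Euc d) : Set (Euc d) :=
  {y | ∃ η ∈ Shemi k0 e, -η ∈ Sig1 k0 ν ω ∧
    ∃ σ ∈ Sig2 k0 ν ω, σ ∈ Shemi k0 (-e) ∧ Hr ν σ ∉ Shemi k0 (-e) ∧ y = η - Hr ν σ}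

/-- Cross product on `Euc 3`. -/
def cross3 (a b : Euc 3) : Euc 3 :=
  (EuclideanSpace.equiv (Fin 3) ℝ).symm
    ![a 1 * b 2 - a 2 * b 1, a 2 * b 0 - a 0 * b 2, a 0 * b 1 - a 1 * b 0]

end


noncomputable section AuxStmt8

open scoped RealInnerProductSpace

lemma aux_exists_unit_orthogonal {d : ℕ} (hd : 3 < d) (a b c : Euc d) :
    ∃ w : Euc d, ‖w‖ = 1 ∧ ⟪w, a⟫ = 0 ∧ ⟪w, b⟫ = 0 ∧ ⟪w, c⟫ = 0 := by
  classical
  set K : Submodule ℝ (Euc d) := Submodule.span ℝ {a, b, c} with hK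
  have hfr : Module.finrank ℝ K ≤ 3 := by
    have h1 := finrank_span_le_card (R := ℝ) ({a, b, c} : Set (Euc d))
    refine h1.trans ?_
    have hsub : ({a, b, c} : Set (Euc d)).toFinset ⊆ {a, b, c} := by
      intro x hx; simpa using hx
    refine (Finset.card_le_card hsub).trans ?_
    refine (Finset.card_insert_le _ _).trans ?_
    have := Finset.card_insert_le b ({c} : Finset (Euc d))
    simp at this ⊢
    omega
  have hbot : (Kᗮ : Submodule ℝ (Euc d)) ≠ ⊥ := by
    intro h
    have h2 := Submodule.finrank_add_finrank_orthogonal (K := K)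
    rw [h] at h2
    simp [finrank_euclideanSpace] at h2
    omega
  obtain ⟨w, hwK, hw0⟩ := Submodule.exists_mem_ne_zero_of_ne_bot hbot
  have hwa : ⟪w, a⟫ = 0 := by
    have := hwK a (Submodule.subset_span (by simp)); rwa [real_inner_comm] at this
  have hwb : ⟪w, b⟫ = 0 := by
    have := hwK b (Submodule.subset_span (by simp)); rwa [real_inner_comm] at this
  have hwc : ⟪w, c⟫ = 0 := by
    have := hwK c (Submodule.subset_span (by simp)); rwa [real_inner_comm] at this
  refine ⟨‖w‖⁻¹ • w, ?_, ?_, ?_, ?_⟩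
  · rw [norm_smul]
    simp [abs_of_nonneg, inv_mul_cancel₀ (norm_ne_zero_iff.mpr hw0)]
  · rw [real_inner_smul_left, hwa]; ring
  · rw [real_inner_smul_left, hwb]; ring
  · rw [real_inner_smul_left, hwc]; ring

lemma aux_exists_delta {d : ℕ} {O : Set (Euc d)} (hO : IsOpen O) {c : ℝ → Euc d}
    (hc : Continuous c) (h0 : c 0 ∈ O) : ∃ δ > 0, ∀ t : ℝ, |t| < δ → c t ∈ O := by
  have hpre : IsOpen (c ⁻¹' O) := hO.preimage hc
  obtain ⟨δ, hδ, hball⟩ := Metric.isOpen_iff.1 hpre 0 h0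
  exact ⟨δ, hδ, fun t ht => hball (by simpa [Real.dist_eq] using ht)⟩

lemma aux_Hr_cont {d : ℕ} (ν ω : Euc d) : Continuous (fun x : Euc d => ⟪Hr ν x, ω⟫) := by
  unfold Hr
  fun_prop

lemma aux_Hr_smul {d : ℕ} (ν : Euc d) (c : ℝ) (x : Euc d) : Hr ν (c • x) = c • Hr ν x := by
  unfold Hr
  rw [real_inner_smul_left, smul_sub, smul_smul]
  ring_nf

lemma aux_Hr_norm {d : ℕ} {ν : Euc d} (hν : ‖ν‖ = 1) (x : Euc d) : ‖Hr ν x‖ = ‖x‖ := by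
  have h : ⟪Hr ν x, Hr ν x⟫ = ⟪x, x⟫ := by
    unfold Hr
    rw [inner_sub_sub_self, real_inner_smul_left, real_inner_smul_right,
      real_inner_smul_right, real_inner_smul_left, real_inner_comm ν x,
      real_inner_self_eq_norm_sq ν, hν]
    ring
  have h2 : ‖Hr ν x‖ ^ 2 = ‖x‖ ^ 2 := by
    rw [← real_inner_self_eq_norm_sq, ← real_inner_self_eq_norm_sq, h]
  nlinarith [norm_nonneg (Hr ν x), norm_nonneg x]

/-- `Sig2chi` is a neighborhood of each point of `Sig2`. -/
lemma aux_sig2chi_nhds {d : ℕ} {k0 χ : ℝ} (hk0 : 0 < k0) (hχ : χ ∈ Set.Ioo (0:ℝ) 1)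
    {ν ω σ : Euc d} (hν : ‖ν‖ = 1) (hσ : σ ∈ Sig2 k0 ν ω) : Sig2chi k0 χ ν ω ∈ nhds σ := by
  obtain ⟨⟨hσn, hσω⟩, hHn, hHω⟩ := hσ
  set O : Set (Euc d) := {x | 0 < ⟪x, ω⟫} ∩ {x | 0 < ⟪Hr ν x, ω⟫} ∩
    {x | k0 * (1 - χ) < ‖x‖} ∩ {x | ‖x‖ < k0 * (1 + χ)} with hO
  have hOopen : IsOpen O := by
    refine (((isOpen_lt continuous_const (continuous_id.inner continuous_const)).inter
      (isOpen_lt continuous_const (aux_Hr_cont ν ω))).inter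
      (isOpen_lt continuous_const continuous_norm)).inter
      (isOpen_lt continuous_norm continuous_const)
  have hmem : σ ∈ O := by
    refine ⟨⟨⟨hσω, hHω⟩, ?_⟩, ?_⟩
    · simp only [Set.mem_setOf_eq, hσn]; nlinarith [hχ.1]
    · simp only [Set.mem_setOf_eq, hσn]; nlinarith [hχ.1]
  refine Filter.mem_of_superset (hOopen.mem_nhds hmem) ?_
  rintro x ⟨⟨⟨hxω, hxH⟩, hxl⟩, hxu⟩
  simp only [Set.mem_setOf_eq] at hxω hxH hxl hxu
  have hxn : 0 < ‖x‖ := lt_of_le_of_lt (by nlinarith [hχ.2]) hxl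
  have hpos : (0:ℝ) < k0 / ‖x‖ := by positivity
  refine ⟨(k0 / ‖x‖) • x, ⟨⟨?_, ?_⟩, ?_, ?_⟩, ‖x‖ / k0, ⟨?_, ?_⟩, ?_⟩
  · rw [norm_smul, Real.norm_eq_abs, abs_of_pos hpos]; field_simp
  · rw [real_inner_smul_left]; positivity
  · rw [aux_Hr_smul, norm_smul, Real.norm_eq_abs, abs_of_pos hpos, aux_Hr_norm hν]; field_simp
  · rw [aux_Hr_smul, real_inner_smul_left]; positivity
  · rw [lt_div_iff₀ hk0]; linarith
  · rw [div_lt_iff₀ hk0]; linarith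
  · rw [smul_smul]
    rw [div_mul_div_comm, mul_comm, ← div_mul_div_comm, div_self (ne_of_gt hk0),
      div_self (ne_of_gt hxn), one_mul, one_smul]

/-- radial derivative vanishes. -/
lemma aux_fderiv_radial {d : ℕ} (b : Euc d → ℂ) (σ : Euc d) (χ : ℝ) (hχ : 0 < χ)
    (hdiff : DifferentiableAt ℝ b σ)
    (hconst : ∀ t ∈ Set.Ioo (1 - χ) (1 + χ), b (t • σ) = b σ) :
    fderiv ℝ b σ σ = 0 := by
  have hcurve : HasDerivAt (fun t : ℝ => t • σ) σ 1 := by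
    simpa using (hasDerivAt_id (1:ℝ)).smul_const σ
  have hb' : HasFDerivAt b (fderiv ℝ b σ) ((1:ℝ) • σ) := by
    rw [one_smul]; exact hdiff.hasFDerivAt
  have hcomp : HasDerivAt (fun t : ℝ => b (t • σ)) (fderiv ℝ b σ σ) 1 := by
    exact hb'.comp_hasDerivAt 1 hcurve
  have hmem : Set.Ioo (1 - χ) (1 + χ) ∈ nhds (1:ℝ) := by
    apply Ioo_mem_nhds <;> linarith
  have hev : (fun t : ℝ => b (t • σ)) =ᶠ[nhds 1] fun _ => b σ :=
    Filter.eventuallyEq_of_mem hmem fun t ht => hconst t ht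
  exact hcomp.unique ((hasDerivAt_const (1:ℝ) (b σ)).congr_of_eventuallyEq hev)

/-- `ν` is not parallel to a point of `Sig2`. -/
lemma aux_not_parallel {d : ℕ} {k0 : ℝ} (hk0 : 0 < k0) (ν ω σ : Euc d) (hν : ‖ν‖ = 1)
    (hσn : ‖σ‖ = k0) (hσω : 0 < ⟪σ, ω⟫) (hHω : 0 < ⟪σ - (2 * ⟪σ, ν⟫) • ν, ω⟫) :
    ∀ c : ℝ, ν ≠ c • σ := by
  intro c hc
  have hσν : ⟪σ, ν⟫ = c * k0 ^ 2 := by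
    rw [hc, real_inner_smul_right, real_inner_self_eq_norm_sq, hσn]
  have hc2 : c ^ 2 * k0 ^ 2 = 1 := by
    have hn : ‖ν‖ ^ 2 = 1 := by rw [hν]; norm_num
    rw [hc, ← real_inner_self_eq_norm_sq, real_inner_smul_left, real_inner_smul_right,
      real_inner_self_eq_norm_sq, hσn] at hn
    nlinarith
  have hH : σ - (2 * ⟪σ, ν⟫) • ν = -σ := by
    rw [hσν, hc, smul_smul]
    have h3 : 2 * (c * k0 ^ 2) * c = 2 := by nlinarith
    rw [h3]
    module
  rw [hH, inner_neg_left] at hHω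
  linarith

/-- from badness of the gradient, get a direction orthogonal to `σ` and `ν` where it is nonzero. -/
lemma aux_bad_dir {d : ℕ} {k0 : ℝ} (hk0 : 0 < k0) (ν σ : Euc d) (hσn : ‖σ‖ = k0)
    (f : Euc d →L[ℝ] ℂ) (hfσ : f σ = 0)
    (hπ : ν - (⟪ν, σ⟫ / ‖σ‖ ^ 2) • σ ≠ 0)
    (hbad : ¬∃ c : ℂ, ∀ x : Euc d, f x = c * ((⟪ν - (⟪ν, σ⟫ / ‖σ‖ ^ 2) • σ, x⟫ : ℝ) : ℂ)) :
    ∃ x : Euc d, ⟪x, σ⟫ = 0 ∧ ⟪x, ν⟫ = 0 ∧ f x ≠ 0 := by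
  set π : Euc d := ν - (⟪ν, σ⟫ / ‖σ‖ ^ 2) • σ with hπdef
  have hπσ : ⟪π, σ⟫ = 0 := by
    rw [hπdef, inner_sub_left, real_inner_smul_left, real_inner_self_eq_norm_sq, hσn]
    field_simp
    ring
  have hx0 : ∃ x : Euc d, ⟪π, x⟫ = 0 ∧ f x ≠ 0 := by
    by_contra h
    push_neg at h
    apply hbad
    have hπn : (‖π‖ : ℝ) ≠ 0 := norm_ne_zero_iff.mpr hπ
    have hπn2 : (‖π‖ : ℝ) ^ 2 ≠ 0 := pow_ne_zero 2 hπn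
    refine ⟨f π / ((‖π‖ ^ 2 : ℝ) : ℂ), fun x => ?_⟩
    have hdecomp : ⟪π, x - (⟪π, x⟫ / ‖π‖ ^ 2) • π⟫ = 0 := by
      rw [inner_sub_right, real_inner_smul_right, real_inner_self_eq_norm_sq,
        div_mul_cancel₀ _ hπn2, sub_self]
    have hx := h _ hdecomp
    rw [map_sub, _root_.map_smul, sub_eq_zero] at hx
    rw [hx, Complex.real_smul]
    have hπc : ((‖π‖ ^ 2 : ℝ) : ℂ) ≠ 0 := by
      exact_mod_cast Complex.ofReal_ne_zero.mpr hπn2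
    push_cast at hπc ⊢
    field_simp
  obtain ⟨x, hxπ, hxf⟩ := hx0
  refine ⟨x - (⟪x, σ⟫ / k0 ^ 2) • σ, ?_, ?_, ?_⟩
  · rw [inner_sub_left, real_inner_smul_left, real_inner_self_eq_norm_sq, hσn]
    field_simp
    ring
  · have hxν : ⟪x, ν⟫ = (⟪ν, σ⟫ / k0 ^ 2) * ⟪x, σ⟫ := by
      have hexp : ⟪π, x⟫ = ⟪ν, x⟫ - (⟪ν, σ⟫ / ‖σ‖ ^ 2) * ⟪σ, x⟫ := by
        rw [hπdef, inner_sub_left, real_inner_smul_left]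
      rw [hxπ] at hexp
      rw [hσn] at hexp
      have c1 : ⟪x, ν⟫ = ⟪ν, x⟫ := by rw [real_inner_comm]
      have c2 : ⟪x, σ⟫ = ⟪σ, x⟫ := by rw [real_inner_comm]
      rw [c1, c2]
      linarith
    rw [inner_sub_left, real_inner_smul_left, hxν, real_inner_comm σ ν]
    ring
  · rw [map_sub, _root_.map_smul, hfσ]
    simpa using hxf

/-- quadratic expansion of the inner product of a three-term combination. -/
lemma aux_inner3 {d : ℕ} (p q r : Euc d) (A B : ℝ) :
    ⟪p + A • q + B • r, p + A • q + B • r⟫ =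
      ⟪p, p⟫ + A ^ 2 * ⟪q, q⟫ + B ^ 2 * ⟪r, r⟫ + 2 * A * ⟪p, q⟫ + 2 * B * ⟪p, r⟫ +
        2 * (A * B) * ⟪q, r⟫ := by
  simp only [inner_add_left, inner_add_right, real_inner_smul_left, real_inner_smul_right,
    real_inner_comm q p, real_inner_comm r p, real_inner_comm r q]
  ring

lemma aux_norm_of_inner_self {d : ℕ} {x : Euc d} {k : ℝ} (hk : 0 ≤ k)
    (h : ⟪x, x⟫ = k ^ 2) : ‖x‖ = k := by
  rw [real_inner_self_eq_norm_sq] at h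
  nlinarith [norm_nonneg x]

/-- curve construction: rotate `α` slightly towards `z` while keeping hemisphere/V-membership,
obtaining positive inner product with `z`. -/
lemma aux_curve {d : ℕ} {k0 : ℝ} (hk0 : 0 < k0) (e σ : Euc d) {V : Set (Euc d)}
    (hV : IsOpen V) (α z : Euc d) (hαn : ‖α‖ = k0) (hαe : 0 < ⟪α, e⟫) (hαV : α - σ ∈ V)
    (hzn : ‖z‖ = 1) (hzα : ⟪z, α⟫ = 0) :
    ∃ β : Euc d, ‖β‖ = k0 ∧ 0 < ⟪β, e⟫ ∧ β - σ ∈ V ∧ 0 < ⟪z, β⟫ := by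
  set c : ℝ → Euc d := fun t => Real.cos t • α + (k0 * Real.sin t) • z with hc
  have hccont : Continuous c := by
    exact (Real.continuous_cos.smul continuous_const).add
      ((continuous_const.mul Real.continuous_sin).smul continuous_const)
  have hc0 : c 0 = α := by simp [hc]
  set O : Set (Euc d) := {v | 0 < ⟪v, e⟫} ∩ {v | v - σ ∈ V} with hOdef
  have hOopen : IsOpen O :=
    (isOpen_lt continuous_const (continuous_id.inner continuous_const)).inter
      (hV.preimage (continuous_id.sub continuous_const))
  have hmem : c 0 ∈ O := by
    rw [hc0]; exact ⟨hαe, hαV⟩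
  obtain ⟨δ, hδ, hball⟩ := aux_exists_delta hOopen hccont hmem
  set t : ℝ := min (δ / 2) 1 with ht
  have ht0 : 0 < t := lt_min (by linarith) one_pos
  have htδ : |t| < δ := by
    rw [abs_of_pos ht0]
    exact lt_of_le_of_lt (min_le_left _ _) (by linarith)
  have htπ : t < Real.pi := lt_of_le_of_lt (min_le_right _ _) (by linarith [Real.pi_gt_three])
  have hsin : 0 < Real.sin t := Real.sin_pos_of_pos_of_lt_pi ht0 htπ
  have hmem2 := hball t htδ
  have hzz : ⟪z, z⟫ = 1 := by
    rw [real_inner_self_eq_norm_sq, hzn]; norm_num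
  refine ⟨c t, ?_, hmem2.1, hmem2.2, ?_⟩
  · apply aux_norm_of_inner_self hk0.le
    have hexp := aux_inner3 (0 : Euc d) α z (Real.cos t) (k0 * Real.sin t)
    simp only [zero_add, inner_zero_left, inner_zero_right] at hexp
    rw [hc]
    simp only []
    rw [hexp, real_inner_self_eq_norm_sq, hαn, hzz, real_inner_comm z α, hzα]
    have := Real.sin_sq_add_cos_sq t
    nlinarith
  · rw [hc]
    simp only []
    rw [inner_add_right, real_inner_smul_right, real_inner_smul_right, hzα, hzz]
    have : 0 < k0 * Real.sin t := by positivity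
    nlinarith

end AuxStmt8

set_option maxHeartbeats 1000000 in
/-- under the density condition on `∇b`, every relatively open subset of `Y2`
contains a point `y'` for which `b` is non-constant on some `C_{y',λ'}` (dimension `> 3`). -/
theorem stmt8 {d : ℕ} (hd : 3 < d) (k0 : ℝ) (hk0 : 0 < k0)
    (ν ω : Euc d) (hν : ‖ν‖ = 1) (hω : ‖ω‖ = 1)
    (e : Euc d) (he : e = eLast d (by omega))
    (χ : ℝ) (hχ : χ ∈ Set.Ioo (0 : ℝ) 1)
    (b : Euc d → ℂ) (hb : BHyp k0 χ ν ω b)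
    (hb1 : ContDiffOn ℝ 1 b (Sig2chi k0 χ ν ω))
    (hdense : Sig2 k0 ν ω ⊆ closure {σ | σ ∈ Sig2 k0 ν ω ∧
      ¬∃ c : ℂ, ∀ x : Euc d,
        fderiv ℝ b σ x = c * ((⟪ν - (⟪ν, σ⟫ / ‖σ‖ ^ 2) • σ, x⟫ : ℝ) : ℂ)}) :
    ∀ U : Set (Euc d), U.Nonempty → (∃ V, IsOpen V ∧ U = Y2set k0 ν ω e ∩ V) →
      ∃ y' ∈ U, ∃ lam : ℝ, ∃ σ1 ∈ Cset k0 ν ω e y' lam, ∃ σ2 ∈ Cset k0 ν ω e y' lam,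
        b σ1 ≠ b σ2 := by
  obtain ⟨hχ0, hχ1⟩ := hχ
  intro U hUne hUV
  obtain ⟨V, hVopen, hUeq⟩ := hUV
  obtain ⟨y0, hy0U⟩ := hUne
  have hy0 : y0 ∈ Y2set k0 ν ω e ∩ V := by rw [← hUeq]; exact hy0U
  obtain ⟨⟨η0, hη0S, σ0, hσ0S, hy0eq⟩, hy0V⟩ := hy0
  -- find a "bad" σ close to σ0
  have hσ0O : σ0 ∈ {z : Euc d | η0 - z ∈ V} := by
    simp only [Set.mem_setOf_eq, ← hy0eq]; exact hy0V
  have hOopen : IsOpen {z : Euc d | η0 - z ∈ V} :=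
    hVopen.preimage (continuous_const.sub continuous_id)
  have hcl := hdense hσ0S
  rw [mem_closure_iff] at hcl
  obtain ⟨σ, hσV', hσmem⟩ := hcl _ hOopen hσ0O
  obtain ⟨hσS, hσbad⟩ := hσmem
  have hσV : η0 - σ ∈ V := hσV'
  have hσS2 := hσS
  obtain ⟨⟨hσn, hσω⟩, hHn, hHω⟩ := hσS2
  -- derivative facts
  have hnhds := aux_sig2chi_nhds hk0 ⟨hχ0, hχ1⟩ hν hσS
  have hdiff : DifferentiableAt ℝ b σ := (hb1.differentiableOn one_ne_zero).differentiableAt hnhds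
  set f : Euc d →L[ℝ] ℂ := fderiv ℝ b σ with hfdef
  have hfσ : f σ = 0 := aux_fderiv_radial b σ χ hχ0 hdiff (hb.2 σ hσS)
  have hnp : ∀ c : ℝ, ν ≠ c • σ :=
    aux_not_parallel hk0 ν ω σ hν hσn hσω (by simpa [Hr] using hHω)
  have hπ : ν - (⟪ν, σ⟫ / ‖σ‖ ^ 2) • σ ≠ 0 := by
    intro h
    exact hnp (⟪ν, σ⟫ / ‖σ‖ ^ 2) (sub_eq_zero.mp h)
  obtain ⟨x, hxσ, hxν, hxf⟩ := aux_bad_dir hk0 ν σ hσn f hfσ hπ hσbad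
  -- main claim: there is a good η and a tangent direction x' with nonzero derivative
  have hA : ∃ η : Euc d, (‖η‖ = k0 ∧ 0 < ⟪η, e⟫) ∧ η - σ ∈ V ∧
      (∀ a c : ℝ, η ≠ a • σ + c • ν) ∧
      ∃ x' : Euc d, ⟪x', σ⟫ = 0 ∧ ⟪x', ν⟫ = 0 ∧ ⟪x', η⟫ = 0 ∧ f x' ≠ 0 := by
    by_contra hn
    push_neg at hn
    obtain ⟨z0, hz0n, hz0η0, hz0σ, hz0ν⟩ := aux_exists_unit_orthogonal hd η0 σ ν
    obtain ⟨hη0n, hη0e⟩ := hη0S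
    obtain ⟨α, hαn, hαe, hαV, hz0α⟩ := aux_curve hk0 e σ hVopen η0 z0 hη0n hη0e hσV hz0n hz0η0
    have hαP : ∀ a c : ℝ, α ≠ a • σ + c • ν := by
      intro a c h
      rw [h, inner_add_right, real_inner_smul_right, real_inner_smul_right, hz0σ, hz0ν] at hz0α
      simp at hz0α
    have hxα : ⟪x, α⟫ ≠ 0 := by
      intro h
      exact hxf (hn α ⟨hαn, hαe⟩ hαV hαP x hxσ hxν h)
    obtain ⟨w, hwn, hwσ, hwν, hwα⟩ := aux_exists_unit_orthogonal hd σ ν α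
    have hfw : f w = 0 := hn α ⟨hαn, hαe⟩ hαV hαP w hwσ hwν hwα
    obtain ⟨η, hηn, hηe, hηV, hwη⟩ := aux_curve hk0 e σ hVopen α w hαn hαe hαV hwn hwα
    have hηP : ∀ a c : ℝ, η ≠ a • σ + c • ν := by
      intro a c h
      rw [h, inner_add_right, real_inner_smul_right, real_inner_smul_right, hwσ, hwν] at hwη
      simp at hwη
    set x3 : Euc d := ⟪x, η⟫ • w - ⟪w, η⟫ • x with hx3
    have h3σ : ⟪x3, σ⟫ = 0 := by
      rw [hx3, inner_sub_left, real_inner_smul_left, real_inner_smul_left, hwσ, hxσ]; ring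
    have h3ν : ⟪x3, ν⟫ = 0 := by
      rw [hx3, inner_sub_left, real_inner_smul_left, real_inner_smul_left, hwν, hxν]; ring
    have h3η : ⟪x3, η⟫ = 0 := by
      rw [hx3, inner_sub_left, real_inner_smul_left, real_inner_smul_left]; ring
    have h3 := hn η ⟨hηn, hηe⟩ hηV hηP x3 h3σ h3ν h3η
    rw [hx3, map_sub, _root_.map_smul, _root_.map_smul, hfw, smul_zero, zero_sub,
      neg_eq_zero] at h3
    rcases smul_eq_zero.mp h3 with h | h
    · exact (ne_of_gt hwη) h
    · exact hxf h
  obtain ⟨η, ⟨hηn, hηe⟩, hηV, hηP, x', hx'σ, hx'ν, hx'η, hx'f⟩ := hA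
  -- the point y'
  set y' : Euc d := η - σ with hy'def
  have hη_eq : σ + y' = η := by rw [hy'def]; abel
  have hy'U : y' ∈ U := by
    rw [hUeq]
    exact ⟨⟨η, ⟨hηn, hηe⟩, σ, hσS, rfl⟩, hηV⟩
  refine ⟨y', hy'U, ⟪σ, ν⟫, σ, ⟨hσS, by rw [hη_eq]; exact ⟨hηn, hηe⟩, rfl⟩, ?_⟩
  -- ingredients for the curve inside `C_{y',λ}`
  have hx'0 : x' ≠ 0 := fun h => hx'f (by rw [h, map_zero])
  have hx'n : (‖x'‖ : ℝ) ≠ 0 := norm_ne_zero_iff.mpr hx'0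
  have hx'y' : ⟪x', y'⟫ = 0 := by rw [hy'def, inner_sub_right, hx'η, hx'σ]; ring
  set yp : Euc d := y' - ⟪y', ν⟫ • ν with hyp
  have hνν : ⟪ν, ν⟫ = 1 := by
    rw [real_inner_self_eq_norm_sq, hν]; norm_num
  have hypν : ⟪yp, ν⟫ = 0 := by
    rw [hyp, inner_sub_left, real_inner_smul_left, hνν]; ring
  have hyp0 : yp ≠ 0 := by
    intro h
    rw [hyp, sub_eq_zero] at h
    have hη2 : η = (1 : ℝ) • σ + ⟪y', ν⟫ • ν := by
      rw [one_smul, ← hη_eq]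
      exact congrArg (σ + ·) h
    exact hηP 1 ⟪y', ν⟫ hη2
  have hypn2 : (‖yp‖ : ℝ) ^ 2 ≠ 0 := pow_ne_zero 2 (norm_ne_zero_iff.mpr hyp0)
  have hypyp : ⟪yp, yp⟫ = ‖yp‖ ^ 2 := real_inner_self_eq_norm_sq yp
  have hx'yp : ⟪x', yp⟫ = 0 := by
    rw [hyp, inner_sub_right, hx'y', real_inner_smul_right, hx'ν]; ring
  set s : Euc d := σ - ⟪σ, ν⟫ • ν - (⟪σ, yp⟫ / ‖yp‖ ^ 2) • yp with hs
  have hsν : ⟪s, ν⟫ = 0 := by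
    rw [hs, inner_sub_left, inner_sub_left, real_inner_smul_left, real_inner_smul_left,
      hνν, hypν]
    ring
  have hsyp : ⟪s, yp⟫ = 0 := by
    have hνyp : ⟪ν, yp⟫ = 0 := by rw [real_inner_comm]; exact hypν
    rw [hs, inner_sub_left, inner_sub_left, real_inner_smul_left, real_inner_smul_left,
      hνyp, hypyp]
    field_simp
    ring
  have hsy' : ⟪s, y'⟫ = 0 := by
    have hy'2 : y' = yp + ⟪y', ν⟫ • ν := by rw [hyp]; abel
    rw [hy'2, inner_add_right, real_inner_smul_right, hsyp, hsν]; ring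
  have hsx' : ⟪s, x'⟫ = 0 := by
    have e1 : ⟪σ, x'⟫ = 0 := by rw [real_inner_comm]; exact hx'σ
    have e2 : ⟪ν, x'⟫ = 0 := by rw [real_inner_comm]; exact hx'ν
    have e3 : ⟪yp, x'⟫ = 0 := by rw [real_inner_comm]; exact hx'yp
    rw [hs, inner_sub_left, inner_sub_left, real_inner_smul_left, real_inner_smul_left,
      e1, e2, e3]
    ring
  have hσs : ⟪σ, s⟫ = ⟪s, s⟫ := by
    have hds : σ - s = ⟪σ, ν⟫ • ν + (⟪σ, yp⟫ / ‖yp‖ ^ 2) • yp := by rw [hs]; abel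
    have hperp : ⟪σ - s, s⟫ = 0 := by
      have e1 : ⟪ν, s⟫ = 0 := by rw [real_inner_comm]; exact hsν
      have e2 : ⟪yp, s⟫ = 0 := by rw [real_inner_comm]; exact hsyp
      rw [hds, inner_add_left, real_inner_smul_left, real_inner_smul_left, e1, e2]
      ring
    rw [inner_sub_left] at hperp
    linarith
  have hs0 : s ≠ 0 := by
    intro h
    have hσeq : σ = ⟪σ, ν⟫ • ν + (⟪σ, yp⟫ / ‖yp‖ ^ 2) • yp := by
      have h2 := h
      rw [hs, sub_sub, sub_eq_zero] at h2
      exact h2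
    obtain ⟨cc, hccdef⟩ : ∃ cc : ℝ, cc = ⟪σ, yp⟫ / ‖yp‖ ^ 2 := ⟨_, rfl⟩
    rw [← hccdef] at hσeq
    by_cases hcc : cc = 0
    · rw [hcc, zero_smul, add_zero] at hσeq
      have hσν0 : ⟪σ, ν⟫ ≠ 0 := by
        intro h0
        rw [h0, zero_smul] at hσeq
        rw [hσeq] at hσn
        simp at hσn
        exact (ne_of_gt hk0) hσn.symm
      apply hnp ⟪σ, ν⟫⁻¹
      have hrw : ⟪σ, ν⟫⁻¹ • σ = ⟪σ, ν⟫⁻¹ • (⟪σ, ν⟫ • ν) := congrArg (⟪σ, ν⟫⁻¹ • ·) hσeq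
      rw [hrw, smul_smul, inv_mul_cancel₀ hσν0, one_smul]
    · have hccyp : cc • yp = σ - ⟪σ, ν⟫ • ν := eq_sub_of_add_eq' hσeq.symm
      have hyp_eq : yp = cc⁻¹ • σ - (cc⁻¹ * ⟪σ, ν⟫) • ν := by
        calc yp = cc⁻¹ • (cc • yp) := by rw [smul_smul, inv_mul_cancel₀ hcc, one_smul]
          _ = cc⁻¹ • (σ - ⟪σ, ν⟫ • ν) := by rw [hccyp]
          _ = cc⁻¹ • σ - (cc⁻¹ * ⟪σ, ν⟫) • ν := by rw [smul_sub, smul_smul]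
      have hy'2 : y' = yp + ⟪y', ν⟫ • ν := by rw [hyp]; abel
      have hη2 : η = (1 + cc⁻¹) • σ + (⟪y', ν⟫ - cc⁻¹ * ⟪σ, ν⟫) • ν := by
        calc η = σ + y' := hη_eq.symm
          _ = σ + (yp + ⟪y', ν⟫ • ν) := by rw [← hy'2]
          _ = σ + ((cc⁻¹ • σ - (cc⁻¹ * ⟪σ, ν⟫) • ν) + ⟪y', ν⟫ • ν) := by rw [← hyp_eq]
          _ = (1 + cc⁻¹) • σ + (⟪y', ν⟫ - cc⁻¹ * ⟪σ, ν⟫) • ν := by module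
      exact hηP _ _ hη2
  have hsn : (‖s‖ : ℝ) ≠ 0 := norm_ne_zero_iff.mpr hs0
  have hss : ⟪s, s⟫ = ‖s‖ ^ 2 := real_inner_self_eq_norm_sq s
  clear_value yp s
  -- the unit tangent direction
  set u : Euc d := ‖x'‖⁻¹ • x' with hu
  have huu : ⟪u, u⟫ = 1 := by
    rw [hu, real_inner_smul_left, real_inner_smul_right, real_inner_self_eq_norm_sq]
    field_simp
  have hσu : ⟪σ, u⟫ = 0 := by
    have e1 : ⟪σ, x'⟫ = 0 := by rw [real_inner_comm]; exact hx'σ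
    rw [hu, real_inner_smul_right, e1]; ring
  have huν : ⟪u, ν⟫ = 0 := by
    rw [hu, real_inner_smul_left, hx'ν]; ring
  have hsu : ⟪s, u⟫ = 0 := by
    rw [hu, real_inner_smul_right, hsx']; ring
  have huy' : ⟪u, y'⟫ = 0 := by
    rw [hu, real_inner_smul_left, hx'y']; ring
  clear_value u
  -- the curve
  set γ : ℝ → Euc d := fun t => σ + (Real.cos t - 1) • s + (‖s‖ * Real.sin t) • u with hγ
  have hγ0 : γ 0 = σ := by simp [hγ]
  have hγinner : ∀ t : ℝ, ⟪γ t, γ t⟫ = k0 ^ 2 := by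
    intro t
    have hexp := aux_inner3 σ s u (Real.cos t - 1) (‖s‖ * Real.sin t)
    simp only [hγ]
    rw [hexp, real_inner_self_eq_norm_sq σ, hσn, hss, huu, hσs, hss, hσu, hsu]
    have hpy : Real.sin t ^ 2 + Real.cos t ^ 2 = 1 := Real.sin_sq_add_cos_sq t
    linear_combination (‖s‖ ^ 2 : ℝ) * hpy
  have hγn : ∀ t : ℝ, ‖γ t‖ = k0 := fun t => aux_norm_of_inner_self hk0.le (hγinner t)
  have hγν : ∀ t : ℝ, ⟪γ t, ν⟫ = ⟪σ, ν⟫ := by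
    intro t
    simp only [hγ]
    rw [inner_add_left, inner_add_left, real_inner_smul_left, real_inner_smul_left, hsν, huν]
    ring
  have hγy' : ∀ t : ℝ, ⟪γ t, y'⟫ = ⟪σ, y'⟫ := by
    intro t
    simp only [hγ]
    rw [inner_add_left, inner_add_left, real_inner_smul_left, real_inner_smul_left, hsy', huy']
    ring
  have hγny : ∀ t : ℝ, ‖γ t + y'‖ = k0 := by
    intro t
    apply aux_norm_of_inner_self hk0.le
    have hexpand : ∀ v : Euc d, ⟪v + y', v + y'⟫ = ⟪v, v⟫ + 2 * ⟪v, y'⟫ + ⟪y', y'⟫ := by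
      intro v
      rw [inner_add_left, inner_add_right, inner_add_right, real_inner_comm y' v]
      ring
    rw [hexpand, hγinner, hγy']
    have hη2 : ⟪σ + y', σ + y'⟫ = k0 ^ 2 := by
      rw [hη_eq, real_inner_self_eq_norm_sq, hηn]
    rw [hexpand] at hη2
    rw [real_inner_self_eq_norm_sq σ, hσn] at hη2
    linarith
  -- open conditions along the curve
  have hγcont : Continuous γ := by
    rw [hγ]
    exact (continuous_const.add
      ((Real.continuous_cos.sub continuous_const).smul continuous_const)).add
      ((continuous_const.mul Real.continuous_sin).smul continuous_const)
  set O3 : Set (Euc d) := {v | 0 < ⟪v, ω⟫} ∩ {v | 0 < ⟪Hr ν v, ω⟫} ∩ {v | 0 < ⟪v + y', e⟫}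
    with hO3
  have hO3open : IsOpen O3 := by
    refine ((isOpen_lt continuous_const (continuous_id.inner continuous_const)).inter
      (isOpen_lt continuous_const (aux_Hr_cont ν ω))).inter
      (isOpen_lt continuous_const ((continuous_id.add continuous_const).inner continuous_const))
  have hγmem : γ 0 ∈ O3 := by
    rw [hγ0]
    refine ⟨⟨hσω, hHω⟩, ?_⟩
    show 0 < ⟪σ + y', e⟫
    rw [hη_eq]
    exact hηe
  obtain ⟨δ, hδ0, hδ⟩ := aux_exists_delta hO3open hγcont hγmem
  have hγC : ∀ t : ℝ, |t| < δ → γ t ∈ Cset k0 ν ω e y' ⟪σ, ν⟫ := by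
    intro t ht
    obtain ⟨⟨hc1, hc2⟩, hc3⟩ := hδ t ht
    exact ⟨⟨⟨hγn t, hc1⟩, by rw [aux_Hr_norm hν]; exact hγn t, hc2⟩, ⟨hγny t, hc3⟩, hγν t⟩
  -- conclude by contradiction
  by_contra hcon
  push_neg at hcon
  have hbc : ∀ t : ℝ, |t| < δ → b (γ t) = b σ := fun t ht => (hcon (γ t) (hγC t ht)).symm
  have h1 : HasDerivAt (fun t : ℝ => Real.cos t - 1) 0 0 := by
    simpa using (Real.hasDerivAt_cos 0).sub_const 1
  have h2 : HasDerivAt (fun t : ℝ => ‖s‖ * Real.sin t) ‖s‖ 0 := by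
    simpa using (Real.hasDerivAt_sin 0).const_mul ‖s‖
  have hγ' : HasDerivAt γ (‖s‖ • u) 0 := by
    have hder := ((h1.smul_const s).const_add σ).add (h2.smul_const u)
    rw [hγ]
    simp only [zero_smul, zero_add] at hder
    exact hder
  have hbσfd : HasFDerivAt b f (γ 0) := by
    rw [hγ0]
    exact hdiff.hasFDerivAt
  have hcomp : HasDerivAt (fun t : ℝ => b (γ t)) (f (‖s‖ • u)) 0 :=
    hbσfd.comp_hasDerivAt 0 hγ'
  have hev : (fun t : ℝ => b (γ t)) =ᶠ[nhds 0] fun _ => b σ := by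
    refine Filter.eventuallyEq_of_mem (Metric.ball_mem_nhds 0 hδ0) fun t ht => ?_
    exact hbc t (by simpa [Real.dist_eq] using ht)
  have hzero : f (‖s‖ • u) = 0 :=
    hcomp.unique ((hasDerivAt_const (0 : ℝ) (b σ)).congr_of_eventuallyEq hev)
  rw [_root_.map_smul] at hzero
  rcases smul_eq_zero.mp hzero with h | h
  · exact hsn h
  · rw [hu, _root_.map_smul] at h
    rcases smul_eq_zero.mp h with h' | h'
    · exact (inv_ne_zero hx'n) h'
    · exact hx'f h'
end

section
/- Let d = 2 and let σ1, σ2 ∈ S(k0) with σ1 ≠ σ2. Then the intersection of the translated upper semicircles satisfies: (σ1 + S_{e_2}) ∩ (σ2 + S_{e_2}) = {σ1 + σ2} if σ1, σ2 ∈ S_{e_2}; (σ1 + S_{e_2}) ∩ (σ2 + S_{e_2}) = {0} if σ1, σ2 ∈ S_{−e_2}; and (σ1 + S_{e_2}) ∩ (σ2 + S_{e_2}) = ∅ otherwise. -/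
open Set MeasureTheory
open scoped RealInnerProductSpace

/-- Scalar dichotomy lemma in coordinates. -/
lemma stmt15_dich (k a0 a1 b0 b1 p0 p1 q0 q1 : ℝ)
    (ha : a0^2 + a1^2 = k^2) (hb : b0^2 + b1^2 = k^2)
    (hp : p0^2 + p1^2 = k^2) (hq : q0^2 + q1^2 = k^2)
    (h0 : b0 - a0 = p0 - q0) (h1 : b1 - a1 = p1 - q1)
    (hw : ¬(p0 = q0 ∧ p1 = q1)) :
    (b0 = p0 ∧ b1 = p1 ∧ a0 = q0 ∧ a1 = q1) ∨
    (a0 = -p0 ∧ a1 = -p1 ∧ b0 = -q0 ∧ b1 = -q1) := by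
  set X0 := a0 + b0 with hX0
  set X1 := a1 + b1 with hX1
  set Y0 := p0 + q0 with hY0
  set Y1 := p1 + q1 with hY1
  have hX : (p0 - q0) * X0 + (p1 - q1) * X1 = 0 := by
    linear_combination (-X0) * h0 + (-X1) * h1 + hb - ha
  have hY : (p0 - q0) * Y0 + (p1 - q1) * Y1 = 0 := by
    linear_combination hp - hq
  have hdet : X0 * Y1 - X1 * Y0 = 0 := by
    rcases (show p0 - q0 ≠ 0 ∨ p1 - q1 ≠ 0 by
      by_contra h; push_neg at h
      exact hw ⟨by linarith [h.1, sub_eq_zero.mp h.1], by linarith [sub_eq_zero.mp h.2]⟩) with h | h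
    · have hm : (p0 - q0) * (X0 * Y1 - X1 * Y0) = 0 := by
        linear_combination Y1 * hX - X1 * hY
      rcases mul_eq_zero.mp hm with h' | h'
      · exact absurd h' h
      · exact h'
    · have hm : (p1 - q1) * (X0 * Y1 - X1 * Y0) = 0 := by
        linear_combination X0 * hY - Y0 * hX
      rcases mul_eq_zero.mp hm with h' | h'
      · exact absurd h' h
      · exact h'
  have hnorm : X0^2 + X1^2 = Y0^2 + Y1^2 := by
    linear_combination 2*ha + 2*hb - 2*hp - 2*hq - (b0 - a0 + p0 - q0) * h0 - (b1 - a1 + p1 - q1) * h1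
  have hip : (X0 - Y0) * (X0 + Y0) + (X1 - Y1) * (X1 + Y1) = 0 := by
    linear_combination hnorm
  have hdet2 : (X0 - Y0) * (X1 + Y1) - (X1 - Y1) * (X0 + Y0) = 0 := by
    linear_combination 2 * hdet
  have key : ((X0 - Y0)^2 + (X1 - Y1)^2) * ((X0 + Y0)^2 + (X1 + Y1)^2) = 0 := by
    linear_combination ((X0 - Y0) * (X0 + Y0) + (X1 - Y1) * (X1 + Y1)) * hip +
      ((X0 - Y0) * (X1 + Y1) - (X1 - Y1) * (X0 + Y0)) * hdet2
  rcases mul_eq_zero.mp key with h | h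
  · left
    have e0 : X0 - Y0 = 0 := by
      have h2 : (X0 - Y0)^2 = 0 :=
        le_antisymm (by linarith [sq_nonneg (X1 - Y1)]) (sq_nonneg _)
      exact sq_eq_zero_iff.mp h2
    have e1 : X1 - Y1 = 0 := by
      have h2 : (X1 - Y1)^2 = 0 :=
        le_antisymm (by linarith [sq_nonneg (X0 - Y0)]) (sq_nonneg _)
      exact sq_eq_zero_iff.mp h2
    refine ⟨by linarith, by linarith, by linarith, by linarith⟩
  · right
    have e0 : X0 + Y0 = 0 := by
      have h2 : (X0 + Y0)^2 = 0 :=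
        le_antisymm (by linarith [sq_nonneg (X1 + Y1)]) (sq_nonneg _)
      exact sq_eq_zero_iff.mp h2
    have e1 : X1 + Y1 = 0 := by
      have h2 : (X1 + Y1)^2 = 0 :=
        le_antisymm (by linarith [sq_nonneg (X0 + Y0)]) (sq_nonneg _)
      exact sq_eq_zero_iff.mp h2
    refine ⟨by linarith, by linarith, by linarith, by linarith⟩

section Stmt15Aux

open scoped RealInnerProductSpace

lemma stmt15_normsq (x : Euc 2) : x 0 ^ 2 + x 1 ^ 2 = ‖x‖ ^ 2 := by
  rw [← real_inner_self_eq_norm_sq, PiLp.inner_apply]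
  simp [Fin.sum_univ_two]

lemma stmt15_memS (k0 : ℝ) (x : Euc 2) :
    x ∈ Shemi k0 e2 ↔ ‖x‖ = k0 ∧ 0 < x 1 := by
  simp [Shemi, e2, EuclideanSpace.inner_single_right]

lemma stmt15_memS' (k0 : ℝ) (x : Euc 2) :
    x ∈ Shemi k0 (-e2) ↔ ‖x‖ = k0 ∧ x 1 < 0 := by
  simp [Shemi, e2, EuclideanSpace.inner_single_right, inner_neg_right]

end Stmt15Aux

/-- intersection of two translated upper semicircles in two dimensions. -/
theorem stmt15 (k0 : ℝ) (hk0 : 0 < k0)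
    (σ1 σ2 : Euc 2) (h1 : ‖σ1‖ = k0) (h2 : ‖σ2‖ = k0) (hne : σ1 ≠ σ2) :
    ((σ1 ∈ Shemi k0 e2 ∧ σ2 ∈ Shemi k0 e2) →
      ((σ1 + ·) '' Shemi k0 e2) ∩ ((σ2 + ·) '' Shemi k0 e2) = {σ1 + σ2}) ∧
    ((σ1 ∈ Shemi k0 (-e2) ∧ σ2 ∈ Shemi k0 (-e2)) →
      ((σ1 + ·) '' Shemi k0 e2) ∩ ((σ2 + ·) '' Shemi k0 e2) = {0}) ∧
    ((¬(σ1 ∈ Shemi k0 e2 ∧ σ2 ∈ Shemi k0 e2) ∧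
      ¬(σ1 ∈ Shemi k0 (-e2) ∧ σ2 ∈ Shemi k0 (-e2))) →
      ((σ1 + ·) '' Shemi k0 e2) ∩ ((σ2 + ·) '' Shemi k0 e2) = ∅) := by
  have hnec : ¬(σ1 0 = σ2 0 ∧ σ1 1 = σ2 1) := by
    rintro ⟨ha, hb⟩
    exact hne (PiLp.ext fun i => by fin_cases i <;> assumption)
  have core : ∀ p, p ∈ ((σ1 + ·) '' Shemi k0 e2) ∩ ((σ2 + ·) '' Shemi k0 e2) →
      (σ1 ∈ Shemi k0 e2 ∧ σ2 ∈ Shemi k0 e2 ∧ p = σ1 + σ2) ∨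
      (σ1 ∈ Shemi k0 (-e2) ∧ σ2 ∈ Shemi k0 (-e2) ∧ p = 0) := by
    rintro p ⟨⟨a, ha, rfl⟩, b, hb, hba⟩
    rw [stmt15_memS] at ha hb
    obtain ⟨hna, ha1⟩ := ha
    obtain ⟨hnb, hb1⟩ := hb
    have hba0 : σ2 0 + b 0 = σ1 0 + a 0 := congrArg (fun v : Euc 2 => v 0) hba
    have hba1 : σ2 1 + b 1 = σ1 1 + a 1 := congrArg (fun v : Euc 2 => v 1) hba
    have key := stmt15_dich k0 (a 0) (a 1) (b 0) (b 1) (σ1 0) (σ1 1) (σ2 0) (σ2 1)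
      (by rw [stmt15_normsq, hna]) (by rw [stmt15_normsq, hnb])
      (by rw [stmt15_normsq, h1]) (by rw [stmt15_normsq, h2])
      (by linarith) (by linarith) hnec
    rcases key with ⟨e1, e2', e3, e4⟩ | ⟨e1, e2', e3, e4⟩
    · left
      refine ⟨(stmt15_memS k0 σ1).mpr ⟨h1, by linarith⟩,
        (stmt15_memS k0 σ2).mpr ⟨h2, by linarith⟩, ?_⟩
      have : a = σ2 := PiLp.ext fun i => by fin_cases i <;> assumption
      rw [this]
    · right
      refine ⟨(stmt15_memS' k0 σ1).mpr ⟨h1, by linarith⟩,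
        (stmt15_memS' k0 σ2).mpr ⟨h2, by linarith⟩, ?_⟩
      have : a = -σ1 := PiLp.ext fun i => by
        fin_cases i <;> simp only [PiLp.neg_apply] <;> assumption
      rw [this]
      exact add_neg_cancel σ1
  refine ⟨?_, ?_, ?_⟩
  · rintro ⟨hs1, hs2⟩
    ext p
    constructor
    · intro hp
      rcases core p hp with ⟨_, _, rfl⟩ | ⟨hm1, _, _⟩
      · rfl
      · exfalso
        rw [stmt15_memS] at hs1
        rw [stmt15_memS'] at hm1
        linarith [hs1.2, hm1.2]
    · rintro rfl
      exact ⟨⟨σ2, hs2, rfl⟩, ⟨σ1, hs1, add_comm σ2 σ1⟩⟩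
  · rintro ⟨hs1, hs2⟩
    ext p
    constructor
    · intro hp
      rcases core p hp with ⟨hm1, _, _⟩ | ⟨_, _, rfl⟩
      · exfalso
        rw [stmt15_memS'] at hs1
        rw [stmt15_memS] at hm1
        linarith [hs1.2, hm1.2]
      · rfl
    · rintro rfl
      rw [stmt15_memS'] at hs1 hs2
      refine ⟨⟨-σ1, ?_, add_neg_cancel σ1⟩, ⟨-σ2, ?_, add_neg_cancel σ2⟩⟩
      · exact (stmt15_memS k0 (-σ1)).mpr ⟨by rw [norm_neg, hs1.1], by
          simp only [PiLp.neg_apply]; linarith [hs1.2]⟩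
      · exact (stmt15_memS k0 (-σ2)).mpr ⟨by rw [norm_neg, hs2.1], by
          simp only [PiLp.neg_apply]; linarith [hs2.2]⟩
  · rintro ⟨hn1, hn2⟩
    ext p
    simp only [Set.mem_empty_iff_false, iff_false]
    intro hp
    rcases core p hp with ⟨hm1, hm2, _⟩ | ⟨hm1, hm2, _⟩
    · exact hn1 ⟨hm1, hm2⟩
    · exact hn2 ⟨hm1, hm2⟩
end
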